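/- Let P be a finite set of points in the Euclidean plane ℝ² whose convex hull is a polygon with vertices h_0, h_1, …, h_{m−1} listed in cyclic (counterclockwise) order along the boundary of the convex hull, where m ≥ 3. Then every closed polygonal path w_0, w_1, …, w_N in ℝ² with w_N = w_0 that visits every point of P (i.e., P ⊆ {w_0, …, w_{N−1}}) has total length Σ_{k=0}^{N−1} dist(w_k, w_{k+1}) at least the perimeter of the convex hull, Σ_{j=0}^{m−1} dist(h_j, h_{(j+1) mod m}). -/

import Mathlib

/-- The planar cross product (orientation test): positive iff `a, b, c` make a
counterclockwise (left) turn. -/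
noncomputable def cross2 (a b c : EuclideanSpace ℝ (Fin 2)) : ℝ :=
  (b 0 - a 0) * (c 1 - a 1) - (b 1 - a 1) * (c 0 - a 0)

/-!
Cauchy–Crofton: the average of `|⟪u, v⟫|` over unit vectors `u` is a fixed multiple of
`‖v‖`, so it suffices to compare the lengths of the projections onto each line. Projected onto
a line, the closed tour goes from the highest point of `P` to the lowest and back, so its
projection has length at least twice the width of `P` in that direction. The projection of the
boundary of the hull has length exactly twice the width: by convexity no two edges climb
through the same level, so the ascending edges sweep disjoint intervals of heights.
-/

open Real Set
open scoped RealInnerProductSpace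

local notation "ℝ²" => EuclideanSpace ℝ (Fin 2)

lemma inner_eq_fin_two (u x : ℝ²) : ⟪u, x⟫ = u 0 * x 0 + u 1 * x 1 := by
  simp [PiLp.inner_apply, Fin.sum_univ_two, mul_comm]

lemma integral_abs_cos_pos : 0 < ∫ θ in (0)..(2 * π), |cos θ| := by
  calc (0 : ℝ) < π := pi_pos
    _ = ∫ θ in (0)..(2 * π), cos θ ^ 2 := by simp [integral_cos_sq]
    _ ≤ ∫ θ in (0)..(2 * π), |cos θ| := by
      refine intervalIntegral.integral_mono_on (by positivity)
        ((continuous_cos.pow 2).intervalIntegrable _ _)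
        (continuous_cos.abs.intervalIntegrable _ _) fun θ _ => ?_
      rw [← sq_abs]
      nlinarith [abs_nonneg (cos θ), abs_cos_le_one θ]

lemma integral_abs_inner_eq (x : ℝ²) :
    ∫ θ in (0)..(2 * π), |⟪!₂[cos θ, sin θ], x⟫|
      = (∫ θ in (0)..(2 * π), |cos θ|) * ‖x‖ := by
  set z : ℂ := ⟨x 0, x 1⟩
  have hnorm : ‖z‖ = ‖x‖ := by
    simp [z, Complex.norm_def, Complex.normSq_apply, EuclideanSpace.norm_eq, Fin.sum_univ_two,
      ← sq]
  have hrot : ∀ θ, ⟪!₂[cos θ, sin θ], x⟫ = ‖x‖ * cos (θ - z.arg) := fun θ => by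
    rw [cos_sub, ← hnorm]
    have h0 := Complex.norm_mul_cos_arg z
    have h1 := Complex.norm_mul_sin_arg z
    simp only [z] at h0 h1
    simp only [inner_eq_fin_two, Matrix.cons_val_zero, Matrix.cons_val_one]
    linear_combination (-cos θ) * h0 - sin θ * h1
  have hper : Function.Periodic (fun θ => |cos θ|) (2 * π) := cos_periodic.comp abs
  simp_rw [hrot, abs_mul, abs_norm]
  rw [intervalIntegral.integral_const_mul,
    intervalIntegral.integral_comp_sub_right (fun θ => |cos θ|), mul_comm, zero_sub,
    sub_eq_neg_add, hper.intervalIntegral_add_eq (-z.arg) 0, zero_add]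

lemma sum_norm_le_of_sum_abs_inner_le {ι κ : Type*} (s : Finset ι) (t : Finset κ)
    (x : ι → ℝ²) (y : κ → ℝ²)
    (H : ∀ u : ℝ², ‖u‖ = 1 →
      ∑ i ∈ s, |⟪u, x i⟫| ≤ ∑ k ∈ t, |⟪u, y k⟫|) :
    ∑ i ∈ s, ‖x i‖ ≤ ∑ k ∈ t, ‖y k‖ := by
  have hint : ∀ v : ℝ², IntervalIntegrable (fun θ => |⟪!₂[cos θ, sin θ], v⟫|)
      MeasureTheory.volume 0 (2 * π) :=
    fun v => Continuous.intervalIntegrable (by fun_prop) _ _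
  have hunit : ∀ θ, ‖!₂[cos θ, sin θ]‖ = 1 := fun θ => by
    simp [EuclideanSpace.norm_eq, Fin.sum_univ_two]
  refine le_of_mul_le_mul_left ?_ integral_abs_cos_pos
  simp_rw [Finset.mul_sum, ← integral_abs_inner_eq]
  rw [← intervalIntegral.integral_finsetSum fun i _ => hint (x i),
    ← intervalIntegral.integral_finsetSum fun k _ => hint (y k)]
  exact intervalIntegral.integral_mono_on (by positivity)
    (Continuous.intervalIntegrable (by fun_prop) _ _)
    (Continuous.intervalIntegrable (by fun_prop) _ _) fun θ _ => H _ (hunit θ)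

lemma two_mul_dist_le_sum_dist_of_closed {α : Type*} [PseudoMetricSpace α] (w : ℕ → α)
    {N i j : ℕ} (hclosed : w N = w 0) (hi : i ≤ N) (hj : j ≤ N) :
    2 * dist (w i) (w j) ≤ ∑ k ∈ Finset.range N, dist (w k) (w (k + 1)) := by
  wlog hij : i ≤ j generalizing i j
  · rw [dist_comm]
    exact this hj hi (by omega)
  rw [Finset.range_eq_Ico, ← Finset.sum_Ico_consecutive _ (Nat.zero_le j) hj,
    ← Finset.sum_Ico_consecutive _ (Nat.zero_le i) hij]
  have hsum0i := dist_le_Ico_sum_dist w (Nat.zero_le i)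
  have hsumij := dist_le_Ico_sum_dist w hij
  have hsumjN := dist_le_Ico_sum_dist w hj
  rw [hclosed] at hsumjN
  linarith [dist_triangle (w i) (w 0) (w j), dist_comm (w 0) (w i), dist_comm (w 0) (w j)]

lemma sum_range_sub_mod_eq_zero (f : ℕ → ℝ) (m : ℕ) :
    ∑ j ∈ Finset.range m, (f ((j + 1) % m) - f j) = 0 := by
  cases m with
  | zero => simp
  | succ n =>
    rw [Finset.sum_sub_distrib, Finset.sum_range_succ, Nat.mod_self, Finset.sum_range_succ' f,
      Finset.sum_congr rfl fun j hj => by rw [Nat.mod_eq_of_lt (by simpa using hj)]]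
    ring

lemma sum_abs_sub_mod_le_of_pairwiseDisjoint (f : ℕ → ℝ) {m : ℕ} (hm : 0 < m) {lo hi : ℝ}
    (hf : ∀ j < m, f j ∈ Icc lo hi)
    (hdisj : (Finset.range m : Set ℕ).PairwiseDisjoint fun j => Ioo (f j) (f ((j + 1) % m))) :
    ∑ j ∈ Finset.range m, |f ((j + 1) % m) - f j| ≤ 2 * (hi - lo) := by
  -- The ascending steps add up to the measure of the disjoint union of the intervals they sweep;
  -- the descending steps add up to the same amount because the sequence is cyclic.
  have hsub : (⋃ j ∈ Finset.range m, Ioo (f j) (f ((j + 1) % m))) ⊆ Icc lo hi := by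
    simp only [iUnion_subset_iff, Finset.mem_range]
    exact fun j hj => Ioo_subset_Icc_self.trans
      (Icc_subset_Icc (hf j hj).1 (hf _ (Nat.mod_lt _ hm)).2)
  have hup : ∑ j ∈ Finset.range m, max (f ((j + 1) % m) - f j) 0 ≤ hi - lo := by
    simp_rw [← Real.volume_real_Ioo]
    rw [← MeasureTheory.measureReal_biUnion_finset hdisj (fun j _ => measurableSet_Ioo)
      fun j _ => measure_Ioo_lt_top.ne,
      ← Real.volume_real_Icc_of_le ((hf 0 hm).1.trans (hf 0 hm).2)]
    exact MeasureTheory.measureReal_mono hsub measure_Icc_lt_top.ne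
  have habs : ∀ x : ℝ, |x| = 2 * max x 0 - x := fun x => by
    linarith [max_zero_add_max_neg_zero_eq_abs_self x, max_zero_sub_max_neg_zero_eq_self x]
  simp_rw [habs]
  rw [Finset.sum_sub_distrib, sum_range_sub_mod_eq_zero, ← Finset.mul_sum]
  linarith

lemma cross2_add_smul_sub (a b c d : ℝ²) (r : ℝ) :
    cross2 a b (c + r • (d - c)) = (1 - r) * cross2 a b c + r * cross2 a b d := by
  simp only [cross2, PiLp.add_apply, PiLp.smul_apply, PiLp.sub_apply, smul_eq_mul]
  ring

lemma cross2_eq_zero_of_inner_eq {u a b c d x y : ℝ²} (hx : cross2 a b x = 0)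
    (hy : cross2 c d y = 0) (hxy : ⟪u, x⟫ = ⟪u, y⟫) (hab : ⟪u, a⟫ < ⟪u, b⟫)
    (hcd : ⟪u, c⟫ < ⟪u, d⟫) (hby : 0 ≤ cross2 a b y) (hdx : 0 ≤ cross2 c d x) :
    cross2 a b y = 0 := by
  -- `y - x` is orthogonal to `u`, hence a multiple of `u` turned by a right angle, and the two
  -- orientation conditions force this multiple to have both signs.
  have hu : 0 < u 0 ^ 2 + u 1 ^ 2 := by
    by_contra! hu
    have h0 : u 0 = 0 := by nlinarith
    have h1 : u 1 = 0 := by nlinarith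
    simp [inner_eq_fin_two, h0, h1] at hab
  have key : cross2 a b y * ⟪u, d - c⟫ + cross2 c d x * ⟪u, b - a⟫ = 0 := by
    apply mul_right_cancel₀ hu.ne'
    simp only [cross2, inner_eq_fin_two, PiLp.sub_apply] at *
    linear_combination
      ((u 0 * (b 0 - a 0) + u 1 * (b 1 - a 1)) * ((d 0 - c 0) * u 1 - (d 1 - c 1) * u 0)
        - (u 0 * (d 0 - c 0) + u 1 * (d 1 - c 1)) * ((b 0 - a 0) * u 1 - (b 1 - a 1) * u 0)) * hxy
      + (u 0 ^ 2 + u 1 ^ 2) * (u 0 * (d 0 - c 0) + u 1 * (d 1 - c 1)) * hx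
      + (u 0 ^ 2 + u 1 ^ 2) * (u 0 * (b 0 - a 0) + u 1 * (b 1 - a 1)) * hy
  have hba : 0 < ⟪u, b - a⟫ := by rw [inner_sub_right]; linarith
  have hdc : 0 < ⟪u, d - c⟫ := by rw [inner_sub_right]; linarith
  nlinarith [mul_nonneg hby hdc.le, mul_nonneg hdx hba.le]

lemma cross2_eq_zero_of_crossing {u a b c d : ℝ²} {t : ℝ} (ha : ⟪u, a⟫ < t)
    (hb : t < ⟪u, b⟫) (hc : ⟪u, c⟫ < t) (hd : t < ⟪u, d⟫)
    (habc : 0 ≤ cross2 a b c) (habd : 0 ≤ cross2 a b d) (hcda : 0 ≤ cross2 c d a)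
    (hcdb : 0 ≤ cross2 c d b) : cross2 a b c = 0 := by
  have level : ∀ p q : ℝ², ⟪u, p⟫ < t → t < ⟪u, q⟫ →
      ∃ r ∈ Ioo (0 : ℝ) 1, ⟪u, p + r • (q - p)⟫ = t := fun p q hp hq => by
    refine ⟨(t - ⟪u, p⟫) / (⟪u, q⟫ - ⟪u, p⟫),
      ⟨div_pos (by linarith) (by linarith), (div_lt_one (by linarith)).2 (by linarith)⟩, ?_⟩
    rw [inner_add_right, inner_smul_right, inner_sub_right]
    field_simp [(by linarith : ⟪u, q⟫ - ⟪u, p⟫ ≠ 0)]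
    ring
  have on_line : ∀ (p q : ℝ²) (r : ℝ), cross2 p q (p + r • (q - p)) = 0 := fun p q r => by
    rw [cross2_add_smul_sub]
    simp only [cross2]
    ring
  obtain ⟨s, hs, hx⟩ := level a b ha hb
  obtain ⟨r, hr, hy⟩ := level c d hc hd
  have hy0 := cross2_eq_zero_of_inner_eq (on_line a b s) (on_line c d r) (hx.trans hy.symm)
    (ha.trans hb) (hc.trans hd)
    (by rw [cross2_add_smul_sub]; nlinarith [hr.1, hr.2])
    (by rw [cross2_add_smul_sub]; nlinarith [hs.1, hs.2])
  rw [cross2_add_smul_sub] at hy0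
  nlinarith [hr.1, hr.2]

lemma sub_eq_smul_of_cross2_eq_zero {u a b c : ℝ²} (habc : cross2 a b c = 0)
    (hab : ⟪u, b - a⟫ ≠ 0) : c - a = (⟪u, c - a⟫ / ⟪u, b - a⟫) • (b - a) := by
  simp only [cross2, inner_eq_fin_two, PiLp.sub_apply] at habc hab ⊢
  ext i
  fin_cases i
  · simp only [Fin.zero_eta, PiLp.sub_apply, PiLp.smul_apply, smul_eq_mul]
    field_simp
    linear_combination (-u 1) * habc
  · simp only [Fin.mk_one, PiLp.sub_apply, PiLp.smul_apply, smul_eq_mul]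
    field_simp
    linear_combination (u 0) * habc

lemma eq_of_cross2_eq_zero_of_mem_extremePoints {K : Set ℝ²} {u a b c : ℝ²}
    (ha : a ∈ K.extremePoints ℝ) (hb : b ∈ K) (hc : c ∈ K.extremePoints ℝ)
    (habc : cross2 a b c = 0) (hab : ⟪u, a⟫ < ⟪u, b⟫) (hcb : ⟪u, c⟫ < ⟪u, b⟫) :
    c = a := by
  have hba : 0 < ⟪u, b - a⟫ := by rw [inner_sub_right]; linarith
  set l := ⟪u, c - a⟫ / ⟪u, b - a⟫
  have hc_eq : a + l • (b - a) = c := by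
    rw [← sub_eq_smul_of_cross2_eq_zero habc hba.ne', add_sub_cancel]
  have hl : l < 1 := (div_lt_one hba).2 (by simp only [inner_sub_right]; linarith)
  rcases lt_trichotomy l 0 with hneg | hzero | hpos
  · have hmem : a ∈ openSegment ℝ c b := by
      rw [openSegment_eq_image']
      refine ⟨-l / (1 - l), ⟨div_pos (by linarith) (by linarith),
        (div_lt_one (by linarith)).2 (by linarith)⟩, ?_⟩
      dsimp only
      rw [← hc_eq, show b - (a + l • (b - a)) = (1 - l) • (b - a) by module, smul_smul,
        div_mul_cancel₀ _ (by linarith : (1 : ℝ) - l ≠ 0)]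
      module
    exact ((mem_extremePoints.1 ha).2 c hc.1 b hb hmem).1
  · simpa [hzero] using hc_eq.symm
  · have hmem : c ∈ openSegment ℝ a b := by
      rw [openSegment_eq_image']
      exact ⟨l, ⟨hpos, hl⟩, hc_eq⟩
    exact ((mem_extremePoints.1 hc).2 a ha.1 b hb hmem).1.symm

section ConvexPolygon

variable {K : Set ℝ²} {m : ℕ} {h : ℕ → ℝ²}

lemma pairwiseDisjoint_Ioo_inner_edge (hinj : InjOn h (Iio m))
    (hext : ∀ j < m, h j ∈ K.extremePoints ℝ)
    (hccw : ∀ j < m, ∀ k < m, 0 ≤ cross2 (h j) (h ((j + 1) % m)) (h k)) (u : ℝ²) :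
    (Finset.range m : Set ℕ).PairwiseDisjoint
      fun j => Ioo ⟪u, h j⟫ ⟪u, h ((j + 1) % m)⟫ := by
  intro j hj k hk hjk
  simp only [Finset.coe_range, mem_Iio] at hj hk
  have hj' : (j + 1) % m < m := Nat.mod_lt _ (by omega)
  have hk' : (k + 1) % m < m := Nat.mod_lt _ (by omega)
  refine disjoint_left.2 fun t htj htk => hjk (hinj hj hk ?_)
  have hcol := cross2_eq_zero_of_crossing htj.1 htj.2 htk.1 htk.2
    (hccw j hj k hk) (hccw j hj _ hk') (hccw k hk j hj) (hccw k hk _ hj')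
  exact (eq_of_cross2_eq_zero_of_mem_extremePoints (hext j hj) (hext _ hj').1 (hext k hk) hcol
    (htj.1.trans htj.2) (htk.1.trans htj.2)).symm

lemma sum_abs_inner_edge_le (hinj : InjOn h (Iio m))
    (hext : ∀ j < m, h j ∈ K.extremePoints ℝ)
    (hccw : ∀ j < m, ∀ k < m, 0 ≤ cross2 (h j) (h ((j + 1) % m)) (h k)) (hm : 0 < m)
    (u : ℝ²) {lo hi : ℝ} (hbound : ∀ j < m, ⟪u, h j⟫ ∈ Icc lo hi) :
    ∑ j ∈ Finset.range m, |⟪u, h j - h ((j + 1) % m)⟫| ≤ 2 * (hi - lo) := by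
  rw [Finset.sum_congr rfl fun j _ => by rw [inner_sub_right, abs_sub_comm]]
  exact sum_abs_sub_mod_le_of_pairwiseDisjoint (fun j => ⟪u, h j⟫) hm hbound
    (pairwiseDisjoint_Ioo_inner_edge hinj hext hccw u)

end ConvexPolygon

/-- Let `P` be a finite set of points in the Euclidean plane whose
convex hull is a polygon with vertices `h 0, …, h (m-1)` (`m ≥ 3`) listed in
counterclockwise cyclic order along the boundary of the convex hull (encoded:
the `h j`, for `j < m`, are pairwise distinct, they are exactly the extreme
points of the convex hull of `P`, and every point of `P` lies on the closed
left side of each directed edge `h j → h ((j+1) % m)`).  Then every closed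
polygonal path `w 0, …, w N` (with `w N = w 0`) visiting every point of `P`
has total length at least the perimeter of the convex hull. -/
theorem closed_tour_length_ge_convex_hull_perimeter
    (P : Finset (EuclideanSpace ℝ (Fin 2)))
    (m : ℕ) (hm : 3 ≤ m)
    (h : ℕ → EuclideanSpace ℝ (Fin 2))
    (hinj : Set.InjOn h (Set.Iio m))
    (hvert : h '' Set.Iio m
      = Set.extremePoints ℝ (convexHull ℝ (P : Set (EuclideanSpace ℝ (Fin 2)))))
    (hccw : ∀ j < m, ∀ p ∈ P, 0 ≤ cross2 (h j) (h ((j + 1) % m)) p)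
    (N : ℕ) (w : ℕ → EuclideanSpace ℝ (Fin 2)) (hclosed : w N = w 0)
    (hvisit : ∀ p ∈ P, ∃ k < N, w k = p) :
    ∑ j ∈ Finset.range m, dist (h j) (h ((j + 1) % m))
      ≤ ∑ k ∈ Finset.range N, dist (w k) (w (k + 1)) := by
  have hm0 : 0 < m := by omega
  have hext : ∀ j < m, h j ∈ (convexHull ℝ (P : Set ℝ²)).extremePoints ℝ :=
    fun j hj => hvert ▸ mem_image_of_mem h hj
  have hP : ∀ j < m, h j ∈ P := fun j hj => extremePoints_convexHull_subset (hext j hj)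
  simp_rw [dist_eq_norm]
  refine sum_norm_le_of_sum_abs_inner_le _ _ _ _ fun u _ => ?_
  obtain ⟨_, hpmax, hmax⟩ := P.exists_max_image (inner ℝ u) ⟨h 0, hP 0 hm0⟩
  obtain ⟨_, hpmin, hmin⟩ := P.exists_min_image (inner ℝ u) ⟨h 0, hP 0 hm0⟩
  obtain ⟨k₁, hk₁, rfl⟩ := hvisit _ hpmax
  obtain ⟨k₂, hk₂, rfl⟩ := hvisit _ hpmin
  calc ∑ j ∈ Finset.range m, |⟪u, h j - h ((j + 1) % m)⟫|
      ≤ 2 * (⟪u, w k₁⟫ - ⟪u, w k₂⟫) :=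
        sum_abs_inner_edge_le hinj hext (fun j hj k hk => hccw j hj _ (hP k hk)) hm0 u
          fun j hj => ⟨hmin _ (hP j hj), hmax _ (hP j hj)⟩
    _ ≤ 2 * dist ⟪u, w k₁⟫ ⟪u, w k₂⟫ := by
        gcongr
        exact le_abs_self _
    _ ≤ ∑ k ∈ Finset.range N, dist ⟪u, w k⟫ ⟪u, w (k + 1)⟫ :=
        two_mul_dist_le_sum_dist_of_closed (fun k => ⟪u, w k⟫) (by simp only [hclosed])
          hk₁.le hk₂.le
    _ = ∑ k ∈ Finset.range N, |⟪u, w k - w (k + 1)⟫| := by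
        simp only [Real.dist_eq, inner_sub_right]
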